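/- arXiv:2103.14727 — 2 statements merged into one kernel-verified Lean document; each statement's English description precedes it below -/
import Mathlib

section
/- CVaR is an upper bound never exceeding EVaR: for any random variable c on a finite probability space and ε ∈ (0,1), CVaR_ε(c) ≤ EVaR_ε(c). -/
/-!
Fix `t > 0` and put `b = (1/t) log (E[e^{tc}]/ε)`. Since `x ≤ e^{x-1}`, we have
`(u)₊ ≤ e^{tu-1}/t`, and at `ζ = b - 1/t` this bound integrates to exactly `ε/t`, so the
CVaR objective at `ζ` is at most `b`. Hence CVaR, an infimum over `ζ`, is below every
candidate value of EVaR.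
-/

open Finset

theorem max_zero_le_exp_sub_one_div {t : ℝ} (ht : 0 < t) (u : ℝ) :
    max u 0 ≤ Real.exp (t * u - 1) / t := by
  rw [le_div_iff₀ ht, max_mul_of_nonneg _ _ ht.le, zero_mul]
  exact max_le (by linarith [Real.add_one_le_exp (t * u - 1)]) (Real.exp_pos _).le

theorem exists_cvar_objective_le_log_mgf {Ω : Type*} [Fintype Ω] (P : Ω → ℝ)
    (hP : ∀ ω, 0 ≤ P ω) {ε t : ℝ} (hε : 0 < ε) (ht : 0 < t) (c : Ω → ℝ)
    (hM : 0 < ∑ ω, Real.exp (t * c ω) * P ω) :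
    ∃ ζ : ℝ, ζ + (1 / ε) * ∑ ω, max (c ω - ζ) 0 * P ω ≤
      (1 / t) * Real.log ((∑ ω, Real.exp (t * c ω) * P ω) / ε) := by
  set M := ∑ ω, Real.exp (t * c ω) * P ω
  set b := (1 / t) * Real.log (M / ε)
  refine ⟨b - 1 / t, ?_⟩
  have hexp : ∀ ω, Real.exp (t * (c ω - (b - 1 / t)) - 1) = Real.exp (t * c ω) * (ε / M) := by
    intro ω
    have : t * (c ω - (b - 1 / t)) - 1 = t * c ω - Real.log (M / ε) := by
      simp only [b]; field_simp; ring
    rw [this, Real.exp_sub, Real.exp_log (by positivity)]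
    field_simp
  have hsum : ∑ ω, max (c ω - (b - 1 / t)) 0 * P ω ≤ ε / t :=
    calc ∑ ω, max (c ω - (b - 1 / t)) 0 * P ω
        ≤ ∑ ω, Real.exp (t * (c ω - (b - 1 / t)) - 1) / t * P ω :=
          sum_le_sum fun ω _ =>
            mul_le_mul_of_nonneg_right (max_zero_le_exp_sub_one_div ht _) (hP ω)
      _ = M * (ε / M) / t := by
          simp only [hexp, div_mul_eq_mul_div, mul_right_comm _ (ε / M), ← sum_div, ← sum_mul, M]
      _ = ε / t := by field_simp
  calc b - 1 / t + (1 / ε) * ∑ ω, max (c ω - (b - 1 / t)) 0 * P ω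
      ≤ b - 1 / t + (1 / ε) * (ε / t) := by gcongr
    _ = b := by field_simp; ring

theorem expectation_le_cvar_objective {Ω : Type*} [Fintype Ω] (P : Ω → ℝ)
    (hP : ∀ ω, 0 ≤ P ω) (hP1 : ∑ ω, P ω = 1) {ε : ℝ} (hε0 : 0 < ε) (hε1 : ε ≤ 1)
    (c : Ω → ℝ) (ζ : ℝ) :
    ∑ ω, c ω * P ω ≤ ζ + (1 / ε) * ∑ ω, max (c ω - ζ) 0 * P ω := by
  have hshift : ∑ ω, c ω * P ω = ζ + ∑ ω, (c ω - ζ) * P ω := by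
    simp only [sub_mul, sum_sub_distrib, ← mul_sum, hP1]; ring
  have hle_max : ∑ ω, (c ω - ζ) * P ω ≤ ∑ ω, max (c ω - ζ) 0 * P ω :=
    sum_le_sum fun ω _ => mul_le_mul_of_nonneg_right (le_max_left _ _) (hP ω)
  have hnonneg : 0 ≤ ∑ ω, max (c ω - ζ) 0 * P ω :=
    sum_nonneg fun ω _ => mul_nonneg (le_max_right _ _) (hP ω)
  have hinv : 1 ≤ 1 / ε := by rw [le_div_iff₀ hε0]; linarith
  nlinarith

/-- CVaR never exceeds EVaR: for any random variable `c` on a finite probability space and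
`ε ∈ (0,1)`, `CVaR_ε(c) ≤ EVaR_ε(c)`. -/
theorem stmt16 {Ω : Type*} [Fintype Ω] (P : Ω → ℝ)
    (hP : ∀ ω, 0 < P ω) (hP1 : ∑ ω : Ω, P ω = 1)
    (ε : ℝ) (hε0 : 0 < ε) (hε1 : ε < 1) (c : Ω → ℝ) :
    sInf {x : ℝ | ∃ ζ : ℝ, x = ζ + (1 / ε) * ∑ ω : Ω, max (c ω - ζ) 0 * P ω} ≤
    sInf {x : ℝ | ∃ t : ℝ, 0 < t ∧
      x = (1 / t) * Real.log ((∑ ω : Ω, Real.exp (t * c ω) * P ω) / ε)} := by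
  have hΩ : (univ : Finset Ω).Nonempty := nonempty_of_sum_ne_zero (hP1 ▸ one_ne_zero)
  have hbdd : BddBelow {x : ℝ | ∃ ζ : ℝ, x = ζ + (1 / ε) * ∑ ω, max (c ω - ζ) 0 * P ω} := by
    refine ⟨∑ ω, c ω * P ω, ?_⟩
    rintro _ ⟨ζ, rfl⟩
    exact expectation_le_cvar_objective P (fun ω => (hP ω).le) hP1 hε0 hε1.le c ζ
  refine le_csInf ⟨_, 1, one_pos, rfl⟩ ?_
  rintro _ ⟨t, ht, rfl⟩
  have hM : 0 < ∑ ω, Real.exp (t * c ω) * P ω :=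
    sum_pos (fun ω _ => mul_pos (Real.exp_pos _) (hP ω)) hΩ
  obtain ⟨ζ, hζ⟩ := exists_cvar_objective_le_log_mgf P (fun ω => (hP ω).le) hε0 ht c hM
  exact (csInf_le hbdd ⟨ζ, rfl⟩).trans hζ
end

section
/- As ε → 0⁺, EVaR_ε(c) converges to max(c): for every δ > 0 there exists ε₀ such that for all ε ∈ (0, ε₀), max(c) − δ ≤ EVaR_ε(c) ≤ max(c). -/
/-!
For `ζ > 0` the objective `(1/ζ) log (E[e^{ζc}]/ε)` lies between two explicit bounds.
Keeping only the atom `ω*` where `c` is maximal gives `E[e^{ζc}] ≥ P(ω*) e^{ζ max c}`, so once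
`ε ≤ P(ω*)` the objective is at least `max c` for every `ζ`. Conversely `E[e^{ζc}] ≤ e^{ζ max c}`
bounds the objective by `max c + log(1/ε)/ζ`, which tends to `max c` as `ζ → ∞`. Hence
`EVaR_ε(c) = max c` as soon as `ε ≤ min P`.
-/

section

open Finset Filter Set

variable {Ω : Type*} [Fintype Ω]

noncomputable def evarObjective (P c : Ω → ℝ) (ε ζ : ℝ) : ℝ :=
  1 / ζ * Real.log ((∑ ω, Real.exp (ζ * c ω) * P ω) / ε)

noncomputable def evar (P c : Ω → ℝ) (ε : ℝ) : ℝ :=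
  sInf (evarObjective P c ε '' Ioi 0)

variable {P c : Ω → ℝ} {ε ζ : ℝ}

theorem le_evarObjective (hP : ∀ ω, 0 ≤ P ω) (hε : 0 < ε) (hζ : 0 < ζ) {ω₀ : Ω}
    (hεω₀ : ε ≤ P ω₀) :
    c ω₀ ≤ evarObjective P c ε ζ := by
  have hatom : Real.exp (ζ * c ω₀) * P ω₀ ≤ ∑ ω, Real.exp (ζ * c ω) * P ω :=
    single_le_sum (f := fun ω => Real.exp (ζ * c ω) * P ω)
      (fun ω _ => mul_nonneg (Real.exp_pos _).le (hP ω)) (mem_univ ω₀)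
  have hexp : Real.exp (ζ * c ω₀) ≤ (∑ ω, Real.exp (ζ * c ω) * P ω) / ε := by
    rw [le_div_iff₀ hε]
    calc Real.exp (ζ * c ω₀) * ε ≤ Real.exp (ζ * c ω₀) * P ω₀ := by gcongr
      _ ≤ _ := hatom
  have hlog : ζ * c ω₀ ≤ Real.log ((∑ ω, Real.exp (ζ * c ω) * P ω) / ε) :=
    (Real.le_log_iff_exp_le ((Real.exp_pos _).trans_le hexp)).2 hexp
  rw [evarObjective, one_div, le_inv_mul_iff₀ hζ]
  exact hlog

variable [Nonempty Ω]

theorem sum_exp_mul_le_exp_mul_sup' (hP : ∀ ω, 0 ≤ P ω) (hP1 : ∑ ω, P ω = 1) (hζ : 0 ≤ ζ) :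
    ∑ ω, Real.exp (ζ * c ω) * P ω ≤ Real.exp (ζ * univ.sup' univ_nonempty c) :=
  calc ∑ ω, Real.exp (ζ * c ω) * P ω
      ≤ ∑ ω, Real.exp (ζ * univ.sup' univ_nonempty c) * P ω := by
        gcongr with ω
        · exact hP ω
        · exact le_sup' c (mem_univ ω)
    _ = Real.exp (ζ * univ.sup' univ_nonempty c) := by rw [← mul_sum, hP1, mul_one]

theorem evarObjective_le (hP : ∀ ω, 0 < P ω) (hP1 : ∑ ω, P ω = 1) (hε : 0 < ε) (hζ : 0 < ζ) :
    evarObjective P c ε ζ ≤ univ.sup' univ_nonempty c + Real.log ε⁻¹ / ζ := by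
  have hE : 0 < ∑ ω, Real.exp (ζ * c ω) * P ω :=
    sum_pos (fun ω _ => mul_pos (Real.exp_pos _) (hP ω)) univ_nonempty
  calc evarObjective P c ε ζ
      ≤ 1 / ζ * Real.log (Real.exp (ζ * univ.sup' univ_nonempty c) / ε) := by
        unfold evarObjective
        gcongr
        exact sum_exp_mul_le_exp_mul_sup' (fun ω => (hP ω).le) hP1 hζ.le
    _ = univ.sup' univ_nonempty c + Real.log ε⁻¹ / ζ := by
        rw [Real.log_div (Real.exp_pos _).ne' hε.ne', Real.log_exp, Real.log_inv]
        field_simp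
        ring

theorem evar_eq_sup' (hP1 : ∑ ω, P ω = 1) (hε : 0 < ε) (hεP : ∀ ω, ε ≤ P ω) :
    evar P c ε = univ.sup' univ_nonempty c := by
  have hP : ∀ ω, 0 < P ω := fun ω => hε.trans_le (hεP ω)
  have hlower : ∀ ζ ∈ Ioi (0 : ℝ), univ.sup' univ_nonempty c ≤ evarObjective P c ε ζ :=
    fun ζ hζ => sup'_le _ _ fun ω _ => le_evarObjective (fun ω => (hP ω).le) hε hζ (hεP ω)
  refine le_antisymm ?_ (le_csInf (Set.nonempty_Ioi.image _) (forall_mem_image.2 hlower))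
  have hlim : Tendsto (fun ζ => univ.sup' univ_nonempty c + Real.log ε⁻¹ / ζ) atTop
      (nhds (univ.sup' univ_nonempty c)) := by
    simpa only [add_zero, id] using
      tendsto_const_nhds.add (tendsto_const_nhds.div_atTop (tendsto_id (α := ℝ)))
  -- `sInf` of a set unbounded below is the junk value `0`, so `csInf_le` needs `hlower` too.
  refine ge_of_tendsto hlim ((eventually_gt_atTop 0).mono fun ζ hζ => ?_)
  exact (csInf_le ⟨_, forall_mem_image.2 hlower⟩ (mem_image_of_mem _ hζ)).trans
    (evarObjective_le hP hP1 hε hζ)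

end

open Finset

/-- As `ε → 0⁺`, `EVaR_ε(c)` converges to `max(c)`: for every `δ > 0` there is `ε₀ > 0`
such that for all `ε ∈ (0, ε₀)`, `max(c) − δ ≤ EVaR_ε(c) ≤ max(c)`. -/
theorem stmt19 {Ω : Type*} [Fintype Ω] [Nonempty Ω] (P : Ω → ℝ)
    (hP : ∀ ω, 0 < P ω) (hP1 : ∑ ω : Ω, P ω = 1) (c : Ω → ℝ) :
    let EVaR : ℝ → ℝ := fun ε => sInf {x : ℝ | ∃ ζ : ℝ, 0 < ζ ∧
      x = (1 / ζ) * Real.log ((∑ ω : Ω, Real.exp (ζ * c ω) * P ω) / ε)}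
    ∀ δ : ℝ, 0 < δ → ∃ ε₀ : ℝ, 0 < ε₀ ∧ ∀ ε : ℝ, 0 < ε → ε < ε₀ →
      Finset.univ.sup' Finset.univ_nonempty c - δ ≤ EVaR ε ∧
      EVaR ε ≤ Finset.univ.sup' Finset.univ_nonempty c := by
  intro EVaR δ _
  refine ⟨univ.inf' univ_nonempty P, (lt_inf'_iff _).2 fun ω _ => hP ω, fun ε hε hεε₀ => ?_⟩
  have hEVaR : EVaR ε = evar P c ε := by
    simp only [EVaR, evar, evarObjective, Set.image, Set.mem_Ioi, eq_comm]
  have hεP : ∀ ω, ε ≤ P ω := fun ω => hεε₀.le.trans (inf'_le P (mem_univ ω))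
  rw [hEVaR, evar_eq_sup' hP1 hε hεP]
  constructor <;> linarith
end
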